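/- arXiv:1811.12685 — 2 statements merged into one kernel-verified Lean document; each statement's English description precedes it below -/
import Mathlib

section
/- Let R = ℤ[ξ, α, β]/(2ξ, ξ^{p+1}, ξα, α², β²) for integers 1 ≤ p < q. Then the product αβ is nonzero in R, and R is, as an abelian group, the direct sum of ℤ·1, ℤ·α, ℤ·β, ℤ·αβ, and copies of ℤ/2 generated by ξ^i and ξ^i β for 1 ≤ i ≤ p. -/
noncomputable section
open MvPolynomial

/-- The ideal `(2ξ, ξ^{p+1}, ξα, α², β²)` in `ℤ[ξ,α,β]`. -/
def I10 (p : ℕ) : Ideal (MvPolynomial (Fin 3) ℤ) :=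
  Ideal.span {2 * X 0, X 0 ^ (p + 1), X 0 * X 1, X 1 ^ 2, X 2 ^ 2}

/-- `R = ℤ[ξ,α,β]/(2ξ, ξ^{p+1}, ξα, α², β²)`. -/
abbrev R10 (p : ℕ) := MvPolynomial (Fin 3) ℤ ⧸ I10 p

def xi10 (p : ℕ) : R10 p := Ideal.Quotient.mk (I10 p) (X 0)
def al10 (p : ℕ) : R10 p := Ideal.Quotient.mk (I10 p) (X 1)
def be10 (p : ℕ) : R10 p := Ideal.Quotient.mk (I10 p) (X 2)

namespace Stmt10

variable (p : ℕ)

abbrev Targ := (Fin 4 → ℤ) × ((Fin p ⊕ Fin p) → ZMod 2)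

def v3 (a b c : ℕ) : Targ p :=
  if h : b ≤ 1 ∧ c ≤ 1 ∧ (a = 0 ∨ b = 0) ∧ a ≤ p then
    if h0 : a = 0 then (Pi.single (⟨b + 2 * c, by omega⟩ : Fin 4) 1, 0)
    else (0, Pi.single (if c = 0 then Sum.inl (⟨a - 1, by omega⟩ : Fin p)
                        else Sum.inr (⟨a - 1, by omega⟩ : Fin p)) 1)
  else 0

def v (m : Fin 3 →₀ ℕ) : Targ p := v3 p (m 0) (m 1) (m 2)

def φ : MvPolynomial (Fin 3) ℤ →ₗ[ℤ] Targ p :=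
  (basisMonomials (Fin 3) ℤ).constr ℤ (v p)

lemma φ_monomial (m : Fin 3 →₀ ℕ) (c : ℤ) :
    φ p (monomial m c) = c • v p m := by
  have h1 : monomial m c = c • monomial m 1 := by
    rw [MvPolynomial.smul_monomial]; norm_num
  rw [h1, map_smul]
  congr 1
  have := Module.Basis.constr_basis (basisMonomials (Fin 3) ℤ) ℤ (v p) m
  rwa [show (basisMonomials (Fin 3) ℤ) m = monomial m 1 from
    congrFun (coe_basisMonomials (Fin 3) ℤ) m] at this

lemma v3_eq_zero_of (a b c : ℕ)
    (h : ¬(b ≤ 1 ∧ c ≤ 1 ∧ (a = 0 ∨ b = 0) ∧ a ≤ p)) : v3 p a b c = 0 := by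
  rw [v3, dif_neg h]

lemma two_smul_single (j : Fin p ⊕ Fin p) :
    (2 : ℤ) • (Pi.single j 1 : (Fin p ⊕ Fin p) → ZMod 2) = 0 := by
  ext k
  simp only [Pi.smul_apply, Pi.single_apply, Pi.zero_apply]
  split_ifs
  · rw [zsmul_eq_mul]
    rw [show ((2:ℤ) : ZMod 2) = 0 by decide, zero_mul]
  · simp

lemma two_smul_v3 (a b c : ℕ) (h : a ≠ 0) : (2 : ℤ) • v3 p a b c = 0 := by
  by_cases h1 : b ≤ 1 ∧ c ≤ 1 ∧ (a = 0 ∨ b = 0) ∧ a ≤ p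
  · rw [v3, dif_pos h1, dif_neg h, Prod.smul_mk, smul_zero, two_smul_single]
    rfl
  · rw [v3_eq_zero_of p a b c h1, smul_zero]

lemma φ_ker : ∀ x ∈ I10 p, φ p x = 0 := by
  set J : Ideal (MvPolynomial (Fin 3) ℤ) :=
    { carrier := {x | ∀ r, φ p (r * x) = 0}
      add_mem' := fun {a b} ha hb r => by rw [mul_add, map_add, ha, hb, add_zero]
      zero_mem' := fun r => by rw [mul_zero, map_zero]
      smul_mem' := fun c {x} hx r => by
        rw [smul_eq_mul, ← mul_assoc]; exact hx (r * c) } with hJ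
  have gen : ∀ g : MvPolynomial (Fin 3) ℤ,
      (∀ m : Fin 3 →₀ ℕ, φ p (monomial m 1 * g) = 0) → g ∈ J := by
    intro g hg r
    have h0 : (φ p ∘ₗ LinearMap.mulRight ℤ g) = 0 := by
      apply Module.Basis.ext (basisMonomials (Fin 3) ℤ)
      intro m
      rw [show (basisMonomials (Fin 3) ℤ) m = monomial m 1 from
        congrFun (coe_basisMonomials (Fin 3) ℤ) m]
      simpa using hg m
    simpa using congrFun (congrArg (fun f => f.toFun) h0) r
  have key : I10 p ≤ J := by
    rw [I10, Ideal.span_le]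
    rintro g (rfl | rfl | rfl | rfl | rfl)
    · apply gen; intro m
      rw [show (2:MvPolynomial (Fin 3) ℤ) * X 0 = monomial (Finsupp.single 0 1) 2 by
            rw [show (2:MvPolynomial (Fin 3) ℤ) = C 2 by norm_num, X, C_mul_monomial,
              mul_one],
          monomial_mul, one_mul, φ_monomial]
      rw [v]
      apply two_smul_v3
      simp [Finsupp.add_apply, Finsupp.single_apply] <;> omega
    · apply gen; intro m
      rw [X_pow_eq_monomial, monomial_mul, one_mul, φ_monomial, v]
      rw [v3_eq_zero_of, smul_zero]
      simp [Finsupp.add_apply, Finsupp.single_apply] <;> omega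
    · apply gen; intro m
      rw [show (X 0 : MvPolynomial (Fin 3) ℤ) * X 1
            = monomial (Finsupp.single 0 1 + Finsupp.single 1 1) 1 by
            rw [X, X, monomial_mul]; norm_num,
          monomial_mul, one_mul, φ_monomial, v]
      rw [v3_eq_zero_of, smul_zero]
      simp [Finsupp.add_apply, Finsupp.single_apply] <;> omega
    · apply gen; intro m
      rw [X_pow_eq_monomial, monomial_mul, one_mul, φ_monomial, v]
      rw [v3_eq_zero_of, smul_zero]
      simp [Finsupp.add_apply, Finsupp.single_apply] <;> omega
    · apply gen; intro m
      rw [X_pow_eq_monomial, monomial_mul, one_mul, φ_monomial, v]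
      rw [v3_eq_zero_of, smul_zero]
      simp [Finsupp.add_apply, Finsupp.single_apply] <;> omega
  intro x hx
  simpa using key hx 1


-- relations in R10
lemma mem_gen (p : ℕ) (g : MvPolynomial (Fin 3) ℤ)
    (hg : g ∈ ({2 * X 0, X 0 ^ (p + 1), X 0 * X 1, X 1 ^ 2, X 2 ^ 2} :
      Set (MvPolynomial (Fin 3) ℤ))) :
    Ideal.Quotient.mk (I10 p) g = 0 :=
  Ideal.Quotient.eq_zero_iff_mem.mpr (Ideal.subset_span hg)

lemma two_smul_xi : (2 : ℤ) • xi10 p = 0 := by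
  have h := mem_gen p (2 * X 0) (by simp)
  rw [map_mul, map_ofNat] at h
  rw [zsmul_eq_mul]
  push_cast
  exact h

lemma xi_pow_top : xi10 p ^ (p + 1) = 0 := by
  have h := mem_gen p (X 0 ^ (p + 1)) (by simp)
  rw [map_pow] at h
  exact h

lemma xi_mul_al : xi10 p * al10 p = 0 := by
  have h := mem_gen p (X 0 * X 1) (by simp)
  rw [map_mul] at h
  exact h

lemma al_sq : al10 p ^ 2 = 0 := by
  have h := mem_gen p (X 1 ^ 2) (by simp)
  rw [map_pow] at h
  exact h

lemma be_sq : be10 p ^ 2 = 0 := by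
  have h := mem_gen p (X 2 ^ 2) (by simp)
  rw [map_pow] at h
  exact h

def b0 : Fin 4 → R10 p := ![1, al10 p, be10 p, al10 p * be10 p]

def c0 : Fin p ⊕ Fin p → R10 p :=
  Sum.elim (fun i => xi10 p ^ ((i : ℕ) + 1)) (fun i => xi10 p ^ ((i : ℕ) + 1) * be10 p)

lemma two_smul_c0 (j : Fin p ⊕ Fin p) : (2 : ℤ) • c0 p j = 0 := by
  have key : ∀ n : ℕ, (2:ℤ) • xi10 p ^ (n + 1) = 0 := by
    intro n
    rw [pow_succ', ← smul_mul_assoc, two_smul_xi, zero_mul]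
  cases j with
  | inl i => exact key i
  | inr i =>
    show (2:ℤ) • (xi10 p ^ ((i:ℕ)+1) * be10 p) = 0
    rw [← smul_mul_assoc, key, zero_mul]

def zmap (x : R10 p) (hx : (2 : ℤ) • x = 0) : ZMod 2 →ₗ[ℤ] R10 p :=
  (ZMod.lift 2 ⟨zmultiplesHom _ x, by simpa using hx⟩).toIntLinearMap

lemma zmap_one (x : R10 p) (hx : (2 : ℤ) • x = 0) : zmap p x hx 1 = x := by
  have h1 : (1 : ZMod 2) = ((1 : ℤ) : ZMod 2) := by decide
  show (ZMod.lift 2 ⟨zmultiplesHom _ x, by simpa using hx⟩) 1 = x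
  rw [h1, ZMod.lift_coe]
  simp

lemma zmap_cases (x : R10 p) (hx : (2 : ℤ) • x = 0) (y : ZMod 2) :
    zmap p x hx y = 0 ∨ zmap p x hx y = x := by
  have h2 : ∀ z : ZMod 2, z = 0 ∨ z = 1 := by decide
  rcases h2 y with rfl | rfl
  · left; exact map_zero _
  · right; exact zmap_one p x hx

def ψ : Targ p →ₗ[ℤ] R10 p :=
  LinearMap.coprod
    (LinearMap.lsum ℤ (fun _ : Fin 4 => ℤ) ℤ
      (fun i => LinearMap.toSpanSingleton ℤ _ (b0 p i)))
    (LinearMap.lsum ℤ (fun _ : Fin p ⊕ Fin p => ZMod 2) ℤ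
      (fun j => zmap p (c0 p j) (two_smul_c0 p j)))

lemma ψ_apply (f : Fin 4 → ℤ) (g : (Fin p ⊕ Fin p) → ZMod 2) :
    ψ p (f, g) = (∑ i : Fin 4, f i • b0 p i)
      + ∑ j : Fin p ⊕ Fin p, zmap p (c0 p j) (two_smul_c0 p j) (g j) := by
  simp [ψ, LinearMap.lsum_apply, LinearMap.toSpanSingleton_apply]

lemma ψ_single_left (i : Fin 4) : ψ p (Pi.single i 1, 0) = b0 p i := by
  rw [ψ_apply]
  simp [Pi.single_apply, Finset.sum_ite_eq']

lemma ψ_single_right (j : Fin p ⊕ Fin p) (x : ZMod 2) :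
    ψ p (0, Pi.single j x) = zmap p (c0 p j) (two_smul_c0 p j) x := by
  rw [ψ_apply]
  simp [Pi.single_apply, apply_ite (zmap p _ _), Finset.sum_ite_eq']


def φ' : R10 p →ₗ[ℤ] Targ p :=
  (Submodule.liftQ ((I10 p).restrictScalars ℤ) (φ p)
      (fun x hx => φ_ker p x hx)) ∘ₗ
    (Submodule.Quotient.restrictScalarsEquiv ℤ (I10 p)).symm.toLinearMap

lemma φ'_mk (P : MvPolynomial (Fin 3) ℤ) :
    φ' p (Ideal.Quotient.mk (I10 p) P) = φ p P := by
  have h1 : (Submodule.Quotient.restrictScalarsEquiv ℤ (I10 p)).symm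
      (Ideal.Quotient.mk (I10 p) P) = Submodule.Quotient.mk P :=
    Submodule.Quotient.restrictScalarsEquiv_symm_mk ℤ (I10 p) P
  rw [φ', LinearMap.comp_apply, LinearEquiv.coe_coe, h1]
  rfl

-- normal form lemma
lemma mk_pow_prod (a b c : ℕ) :
    Ideal.Quotient.mk (I10 p) (X 0 ^ a * X 1 ^ b * X 2 ^ c)
      = ψ p (v3 p a b c) := by
  rw [map_mul, map_mul, map_pow, map_pow, map_pow]
  show xi10 p ^ a * al10 p ^ b * be10 p ^ c = _
  by_cases h1 : b ≤ 1 ∧ c ≤ 1 ∧ (a = 0 ∨ b = 0) ∧ a ≤ p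
  · obtain ⟨hb, hc, h0, hap⟩ := h1
    rcases Nat.eq_zero_or_pos a with ha | ha
    · subst ha
      rw [v3, dif_pos ⟨hb, hc, Or.inl rfl, Nat.zero_le p⟩, dif_pos rfl, ψ_single_left]
      interval_cases b <;> interval_cases c <;>
        simp [b0, show ((⟨0,by omega⟩ : Fin 4)) = 0 from rfl,
          show ((⟨1,by omega⟩ : Fin 4)) = 1 from rfl,
          show ((⟨2,by omega⟩ : Fin 4)) = 2 from rfl,
          show ((⟨3,by omega⟩ : Fin 4)) = 3 from rfl]
    · have hb0 : b = 0 := by omega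
      subst hb0
      have hane : a ≠ 0 := by omega
      rw [v3, dif_pos ⟨by omega, hc, Or.inr rfl, hap⟩, dif_neg hane, ψ_single_right,
        zmap_one]
      interval_cases c
      · show xi10 p ^ a * 1 * 1 = c0 p (Sum.inl ⟨a - 1, by omega⟩)
        show xi10 p ^ a * 1 * 1 = xi10 p ^ ((a - 1) + 1)
        rw [mul_one, mul_one, show a - 1 + 1 = a by omega]
      · show xi10 p ^ a * 1 * be10 p ^ 1 = c0 p (Sum.inr ⟨a - 1, by omega⟩)
        show xi10 p ^ a * 1 * be10 p ^ 1 = xi10 p ^ ((a - 1) + 1) * be10 p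
        rw [mul_one, pow_one, show a - 1 + 1 = a by omega]
  · rw [v3_eq_zero_of p a b c h1, map_zero]
    by_cases hb : 2 ≤ b
    · rw [pow_eq_zero_of_le hb (al_sq p), mul_zero, zero_mul]
    by_cases hc : 2 ≤ c
    · rw [pow_eq_zero_of_le hc (be_sq p), mul_zero]
    by_cases hap : p + 1 ≤ a
    · rw [pow_eq_zero_of_le hap (xi_pow_top p), zero_mul, zero_mul]
    have hab : 1 ≤ a ∧ 1 ≤ b := by
      rcases Decidable.not_and_iff_or_not.mp h1 with h | h
      · omega
      rcases Decidable.not_and_iff_or_not.mp h with h | h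
      · omega
      rcases Decidable.not_and_iff_or_not.mp h with h | h
      · omega
      · omega
    obtain ⟨a', ha'⟩ : ∃ a', a = a' + 1 := ⟨a - 1, by omega⟩
    obtain ⟨b', hb'⟩ : ∃ b', b = b' + 1 := ⟨b - 1, by omega⟩
    rw [ha', hb', pow_succ, pow_succ]
    calc xi10 p ^ a' * xi10 p * (al10 p ^ b' * al10 p) * be10 p ^ c
        = (xi10 p ^ a' * al10 p ^ b' * be10 p ^ c) * (xi10 p * al10 p) := by ring
      _ = 0 := by rw [xi_mul_al, mul_zero]

lemma mk_monomial (m : Fin 3 →₀ ℕ) :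
    Ideal.Quotient.mk (I10 p) (monomial m 1) = ψ p (v p m) := by
  have hm : m = Finsupp.single 0 (m 0) + Finsupp.single 1 (m 1) + Finsupp.single 2 (m 2) := by
    ext i
    fin_cases i <;> simp [Finsupp.add_apply, Finsupp.single_apply]
  have hmon : (monomial m 1 : MvPolynomial (Fin 3) ℤ) = X 0 ^ (m 0) * X 1 ^ (m 1) * X 2 ^ (m 2) := by
    rw [X_pow_eq_monomial, X_pow_eq_monomial, X_pow_eq_monomial, monomial_mul,
      monomial_mul, ← hm]
    norm_num
  rw [hmon, mk_pow_prod]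
  rfl

lemma ψφ (P : MvPolynomial (Fin 3) ℤ) :
    ψ p (φ p P) = Ideal.Quotient.mk (I10 p) P := by
  induction P using MvPolynomial.induction_on' with
  | monomial m a =>
    rw [φ_monomial, map_smul, ← mk_monomial,
      ← map_zsmul (Ideal.Quotient.mk (I10 p)) a (monomial m 1),
      MvPolynomial.smul_monomial, smul_eq_mul, mul_one]
  | add f g hf hg => rw [map_add, map_add, hf, hg, map_add]


lemma v3_pure (b c : ℕ) (hb : b ≤ 1) (hc : c ≤ 1) :
    v3 p 0 b c = (Pi.single (⟨b + 2 * c, by omega⟩ : Fin 4) 1, 0) := by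
  rw [v3, dif_pos ⟨hb, hc, Or.inl rfl, Nat.zero_le p⟩, dif_pos rfl]

lemma v3_xi (a c : ℕ) (ha : 1 ≤ a) (hap : a ≤ p) (hc : c ≤ 1) :
    v3 p a 0 c = (0, Pi.single (if c = 0 then Sum.inl (⟨a - 1, by omega⟩ : Fin p)
                  else Sum.inr (⟨a - 1, by omega⟩ : Fin p)) 1) := by
  rw [v3, dif_pos ⟨by omega, hc, Or.inr rfl, hap⟩, dif_neg (by omega)]

lemma φ'_b0 (i : Fin 4) : φ' p (b0 p i) = (Pi.single i 1, 0) := by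
  fin_cases i
  · show φ' p (b0 p 0) = _
    rw [show b0 p 0 = Ideal.Quotient.mk (I10 p) (monomial 0 1) by
      rw [monomial_zero', map_one, map_one]; rfl]
    rw [φ'_mk, φ_monomial, one_smul]
    rw [show v p 0 = v3 p 0 0 0 by simp [v]]
    rw [v3_pure p 0 0 (by omega) (by omega)]
  · show φ' p (b0 p 1) = _
    rw [show b0 p 1 = Ideal.Quotient.mk (I10 p) (monomial (Finsupp.single 1 1) 1) from rfl]
    rw [φ'_mk, φ_monomial, one_smul]
    rw [show v p (Finsupp.single 1 1) = v3 p 0 1 0 by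
      simp [v, Finsupp.single_apply]]
    rw [v3_pure p 1 0 (by omega) (by omega)]
  · show φ' p (b0 p 2) = _
    rw [show b0 p 2 = Ideal.Quotient.mk (I10 p) (monomial (Finsupp.single 2 1) 1) from rfl]
    rw [φ'_mk, φ_monomial, one_smul]
    rw [show v p (Finsupp.single 2 1) = v3 p 0 0 1 by
      simp [v, Finsupp.single_apply]]
    rw [v3_pure p 0 1 (by omega) (by omega)]
  · show φ' p (b0 p 3) = _
    rw [show b0 p 3 = Ideal.Quotient.mk (I10 p)
        (monomial (Finsupp.single 1 1 + Finsupp.single 2 1) 1) by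
      rw [show (monomial (Finsupp.single 1 1 + Finsupp.single 2 1) 1 :
            MvPolynomial (Fin 3) ℤ) = X 1 * X 2 by rw [X, X, monomial_mul]; norm_num]
      rw [map_mul]; rfl]
    rw [φ'_mk, φ_monomial, one_smul]
    rw [show v p (Finsupp.single 1 1 + Finsupp.single 2 1) = v3 p 0 1 1 by
      simp [v, Finsupp.add_apply, Finsupp.single_apply]]
    rw [v3_pure p 1 1 (by omega) (by omega)]

lemma φ'_c0 (j : Fin p ⊕ Fin p) : φ' p (c0 p j) = (0, Pi.single j 1) := by
  cases j with
  | inl i =>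
    show φ' p (xi10 p ^ ((i : ℕ) + 1)) = _
    rw [show xi10 p ^ ((i : ℕ) + 1)
        = Ideal.Quotient.mk (I10 p) (monomial (Finsupp.single 0 ((i : ℕ) + 1)) 1) by
      rw [← X_pow_eq_monomial, map_pow]; rfl]
    rw [φ'_mk, φ_monomial, one_smul]
    rw [show v p (Finsupp.single 0 ((i : ℕ) + 1)) = v3 p ((i : ℕ) + 1) 0 0 by
      simp [v, Finsupp.single_apply]]
    rw [v3_xi p ((i : ℕ) + 1) 0 (by omega) (by omega) (by omega)]
    simp only [if_pos rfl]
    rfl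
  | inr i =>
    show φ' p (xi10 p ^ ((i : ℕ) + 1) * be10 p) = _
    rw [show xi10 p ^ ((i : ℕ) + 1) * be10 p
        = Ideal.Quotient.mk (I10 p)
            (monomial (Finsupp.single 0 ((i : ℕ) + 1) + Finsupp.single 2 1) 1) by
      rw [show (monomial (Finsupp.single 0 ((i : ℕ) + 1) + Finsupp.single 2 1) 1 :
            MvPolynomial (Fin 3) ℤ) = X 0 ^ ((i : ℕ) + 1) * X 2 by
          rw [X_pow_eq_monomial, X, monomial_mul]; norm_num]
      rw [map_mul, map_pow]; rfl]
    rw [φ'_mk, φ_monomial, one_smul]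
    rw [show v p (Finsupp.single 0 ((i : ℕ) + 1) + Finsupp.single 2 1)
        = v3 p ((i : ℕ) + 1) 0 1 by
      simp [v, Finsupp.add_apply, Finsupp.single_apply]]
    rw [v3_xi p ((i : ℕ) + 1) 1 (by omega) (by omega) (by omega)]
    simp only [if_neg one_ne_zero]
    rfl

lemma φ'ψ_left (f : Fin 4 → ℤ) : φ' p (ψ p (f, 0)) = (f, 0) := by
  have hdec : ((f, 0) : Targ p) = ∑ i : Fin 4, f i • ((Pi.single i 1, 0) : Targ p) := by
    ext k
    · simp [Prod.fst_sum, Finset.sum_apply, Pi.single_apply, Finset.sum_ite_eq']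
    · simp [Prod.snd_sum]
  calc φ' p (ψ p (f, 0))
      = ∑ i : Fin 4, f i • φ' p (ψ p ((Pi.single i 1, 0) : Targ p)) := by
        rw [hdec, map_sum, map_sum]; simp only [map_smul]
    _ = ∑ i : Fin 4, f i • ((Pi.single i 1, 0) : Targ p) := by
        simp only [ψ_single_left, φ'_b0]
    _ = (f, 0) := hdec.symm

lemma φ'ψ_right (g : (Fin p ⊕ Fin p) → ZMod 2) : φ' p (ψ p (0, g)) = (0, g) := by
  have hterm : ∀ (j : Fin p ⊕ Fin p) (x : ZMod 2),
      φ' p (ψ p ((0, Pi.single j x) : Targ p)) = (0, Pi.single j x) := by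
    intro j x
    have h2 : ∀ z : ZMod 2, z = 0 ∨ z = 1 := by decide
    rcases h2 x with rfl | rfl
    · rw [Pi.single_zero, Prod.mk_zero_zero, map_zero, map_zero]
    · rw [ψ_single_right, zmap_one, φ'_c0]
  have hdec : ((0, g) : Targ p)
      = ∑ j : Fin p ⊕ Fin p, ((0, Pi.single j (g j)) : Targ p) := by
    ext k
    · simp [Prod.fst_sum, Finset.sum_apply]
    · rcases k with k | k <;>
        simp [Prod.snd_sum, Finset.sum_apply, Pi.single_apply, Finset.sum_ite_eq,
          Finset.sum_ite_eq']
  calc φ' p (ψ p (0, g))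
      = ∑ j : Fin p ⊕ Fin p, φ' p (ψ p ((0, Pi.single j (g j)) : Targ p)) := by
        rw [hdec, map_sum, map_sum]
    _ = ∑ j : Fin p ⊕ Fin p, ((0, Pi.single j (g j)) : Targ p) := by
        simp only [hterm]
    _ = (0, g) := hdec.symm

lemma comp1 : (φ' p) ∘ₗ (ψ p) = LinearMap.id := by
  apply LinearMap.ext
  rintro ⟨f, g⟩
  have hsplit : ((f, g) : Targ p) = (f, 0) + (0, g) := by
    ext <;> simp
  show φ' p (ψ p (f, g)) = (f, g)
  rw [hsplit, map_add, map_add, φ'ψ_left, φ'ψ_right]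

lemma comp2 : (ψ p) ∘ₗ (φ' p) = LinearMap.id := by
  apply LinearMap.ext
  intro x
  obtain ⟨P, rfl⟩ := Ideal.Quotient.mk_surjective x
  show ψ p (φ' p (Ideal.Quotient.mk (I10 p) P)) = _
  rw [φ'_mk, ψφ]
  rfl

end Stmt10

/-- in `R = ℤ[ξ,α,β]/(2ξ, ξ^{p+1}, ξα, α², β²)` (for `1 ≤ p < q`), the
product `αβ` is nonzero, and as an abelian group `R` is the direct sum of `ℤ·1`, `ℤ·α`,
`ℤ·β`, `ℤ·αβ` and copies of `ℤ/2` generated by `ξ^i` and `ξ^i β` for `1 ≤ i ≤ p`. -/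
theorem stmt_10 (p q : ℕ) (hp : 1 ≤ p) (hpq : p < q) :
    al10 p * be10 p ≠ 0 ∧
    ∃ e : R10 p ≃ₗ[ℤ] (Fin 4 → ℤ) × ((Fin p ⊕ Fin p) → ZMod 2),
      e.symm (Pi.single 0 1, 0) = 1 ∧
      e.symm (Pi.single 1 1, 0) = al10 p ∧
      e.symm (Pi.single 2 1, 0) = be10 p ∧
      e.symm (Pi.single 3 1, 0) = al10 p * be10 p ∧
      (∀ i : Fin p, e.symm (0, Pi.single (Sum.inl i) 1) = xi10 p ^ ((i : ℕ) + 1)) ∧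
      (∀ i : Fin p, e.symm (0, Pi.single (Sum.inr i) 1) =
        xi10 p ^ ((i : ℕ) + 1) * be10 p) := by
  classical
  set e : R10 p ≃ₗ[ℤ] Stmt10.Targ p :=
    LinearEquiv.ofLinear (Stmt10.φ' p) (Stmt10.ψ p) (Stmt10.comp1 p) (Stmt10.comp2 p)
    with he
  have hsymm : ∀ t : Stmt10.Targ p, e.symm t = Stmt10.ψ p t := fun t => rfl
  have h0 : e.symm (Pi.single 0 1, 0) = 1 := by
    rw [hsymm, Stmt10.ψ_single_left]; rfl
  have h1 : e.symm (Pi.single 1 1, 0) = al10 p := by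
    rw [hsymm, Stmt10.ψ_single_left]; rfl
  have h2 : e.symm (Pi.single 2 1, 0) = be10 p := by
    rw [hsymm, Stmt10.ψ_single_left]; rfl
  have h3 : e.symm (Pi.single 3 1, 0) = al10 p * be10 p := by
    rw [hsymm, Stmt10.ψ_single_left]; rfl
  have h4 : ∀ i : Fin p, e.symm (0, Pi.single (Sum.inl i) 1) = xi10 p ^ ((i : ℕ) + 1) := by
    intro i
    rw [hsymm, Stmt10.ψ_single_right, Stmt10.zmap_one]
    rfl
  have h5 : ∀ i : Fin p, e.symm (0, Pi.single (Sum.inr i) 1)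
      = xi10 p ^ ((i : ℕ) + 1) * be10 p := by
    intro i
    rw [hsymm, Stmt10.ψ_single_right, Stmt10.zmap_one]
    rfl
  refine ⟨?_, e, h0, h1, h2, h3, h4, h5⟩
  intro hzero
  have hz : ((Pi.single 3 1, 0) : Stmt10.Targ p) = 0 := by
    apply e.symm.injective
    rw [h3, hzero, map_zero]
  have := congrFun (congrArg Prod.fst hz) 3
  simp [Pi.single_eq_same] at this
end
end

section
/- Let F be a field of characteristic ≠ 2 with Witt ring W(F) and fundamental ideal I(F). In the ℤ⊕ℤ/2-graded ring W(F)[ξ,α]/(I(F)ξ, ξ^{p+1}, ξα, α²) with deg ξ = (1,1) and deg α = (p, p+1 mod 2), the homogeneous component of degree (i, i mod 2) for 1 ≤ i ≤ p−1 is isomorphic to W(F)/I(F) ≅ ℤ/2 generated by ξ^i, the component of degree (p, p+1 mod 2) is W(F)·α ≅ W(F), and all components in degrees (i, s) with i > p vanish. -/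
noncomputable section
open MvPolynomial

variable (W : Type) [CommRing W]

/-- The ideal `(Iξ, ξ^{p+1}, ξα, α²)` in `W[ξ,α]`. -/
def I14 (I : Ideal W) (p : ℕ) : Ideal (MvPolynomial (Fin 2) W) :=
  Ideal.span ((fun c => C c * X 0) '' (I : Set W) ∪
    ({X 0 ^ (p + 1), X 0 * X 1, X 1 ^ 2} : Set (MvPolynomial (Fin 2) W)))

/-- `W[ξ,α]/(Iξ, ξ^{p+1}, ξα, α²)`, the (Fasel–Wendt) twisted I-cohomology ring of `ℙ^p`. -/
abbrev T14 (I : Ideal W) (p : ℕ) := MvPolynomial (Fin 2) W ⧸ I14 W I p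

def xi14 (I : Ideal W) (p : ℕ) : T14 W I p := Ideal.Quotient.mk (I14 W I p) (X 0)
def al14 (I : Ideal W) (p : ℕ) : T14 W I p := Ideal.Quotient.mk (I14 W I p) (X 1)

/-! The relations kill `c • ξ^i` (`c ∈ I`, `i ≥ 1`), `ξ^{p+1}`, `ξα` and `α²`. Conversely, `T14` maps
to test rings through its universal property: `ξ ↦ X`, `α ↦ 0` into `(W/I)[X]/(X^{p+1})` shows
that `c • ξ^i ≠ 0` for `c ∉ I` and `1 ≤ i ≤ p`, and `ξ ↦ 0`, `α ↦ ε` into the dual numbers `W[ε]`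
shows that `c • α ≠ 0` for `c ≠ 0`. Hence the annihilators of `ξ^i` and `α` are `I` and `0`, and
`W ∙ x ≅ W ⧸ ann x`. -/

lemma Polynomial.mk_C_mul_X_pow_eq_zero_iff {R : Type} [CommRing R] {a : R} {i n : ℕ}
    (hin : i < n) :
    Ideal.Quotient.mk (Ideal.span {Polynomial.X ^ n}) (Polynomial.C a * Polynomial.X ^ i) = 0 ↔
      a = 0 := by
  rw [Ideal.Quotient.eq_zero_iff_mem, Ideal.mem_span_singleton, Polynomial.X_pow_dvd_iff]
  refine ⟨fun h => by simpa using h i hin, fun ha d _ => by simp [ha]⟩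

section
variable {W} {I : Ideal W} {p : ℕ}

lemma aeval_eq_zero_of_mem_I14 {B : Type} [CommRing B] [Algebra W B] {x y : B}
    (hIx : ∀ c ∈ I, c • x = 0) (hx : x ^ (p + 1) = 0) (hxy : x * y = 0) (hy : y ^ 2 = 0) :
    ∀ f ∈ I14 W I p, aeval ![x, y] f = 0 := by
  intro f hf
  refine (Ideal.span_le (I := RingHom.ker (aeval ![x, y]).toRingHom)).2 ?_ hf
  rintro _ (⟨c, hc, rfl⟩ | hg)
  · simpa [Algebra.smul_def] using hIx c hc
  · simp only [Set.mem_insert_iff, Set.mem_singleton_iff] at hg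
    rcases hg with rfl | rfl | rfl <;> simpa

def liftT14 {B : Type} [CommRing B] [Algebra W B] (x y : B)
    (hIx : ∀ c ∈ I, c • x = 0) (hx : x ^ (p + 1) = 0) (hxy : x * y = 0) (hy : y ^ 2 = 0) :
    T14 W I p →ₐ[W] B :=
  Ideal.Quotient.liftₐ _ (aeval ![x, y]) (aeval_eq_zero_of_mem_I14 hIx hx hxy hy)

section liftT14
variable {B : Type} [CommRing B] [Algebra W B] {x y : B} (hIx : ∀ c ∈ I, c • x = 0)
  (hx : x ^ (p + 1) = 0) (hxy : x * y = 0) (hy : y ^ 2 = 0)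

@[simp]
lemma liftT14_xi14 : liftT14 x y hIx hx hxy hy (xi14 W I p) = x := by
  show aeval ![x, y] (X 0) = _
  simp

@[simp]
lemma liftT14_al14 : liftT14 x y hIx hx hxy hy (al14 W I p) = y := by
  show aeval ![x, y] (X 1) = _
  simp

end liftT14

lemma smul_xi14_eq_zero {c : W} (hc : c ∈ I) : c • xi14 W I p = 0 := by
  rw [xi14, ← Ideal.Quotient.mkₐ_eq_mk W, ← map_smul, Ideal.Quotient.mkₐ_eq_mk,
    Ideal.Quotient.eq_zero_iff_mem, smul_eq_C_mul]
  exact Ideal.subset_span (Or.inl ⟨c, hc, rfl⟩)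

lemma smul_xi14_pow_eq_zero {c : W} (hc : c ∈ I) {i : ℕ} (hi : i ≠ 0) :
    c • xi14 W I p ^ i = 0 := by
  rw [← Nat.succ_pred_eq_of_ne_zero hi, pow_succ, ← mul_smul_comm, smul_xi14_eq_zero hc, mul_zero]

lemma xi14_pow_succ_eq_zero : xi14 W I p ^ (p + 1) = 0 := by
  rw [xi14, ← map_pow, Ideal.Quotient.eq_zero_iff_mem]
  exact Ideal.subset_span (Or.inr (by simp))

lemma xi14_pow_eq_zero {i : ℕ} (hi : p < i) : xi14 W I p ^ i = 0 := by
  rw [← Nat.add_sub_of_le hi, pow_add, xi14_pow_succ_eq_zero, zero_mul]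

lemma xi14_mul_al14 : xi14 W I p * al14 W I p = 0 := by
  rw [xi14, al14, ← map_mul, Ideal.Quotient.eq_zero_iff_mem]
  exact Ideal.subset_span (Or.inr (by simp))

lemma al14_sq_eq_zero : al14 W I p ^ 2 = 0 := by
  rw [al14, ← map_pow, Ideal.Quotient.eq_zero_iff_mem]
  exact Ideal.subset_span (Or.inr (by simp))

lemma algebraMap_eq_zero_of_smul_xi14_pow_eq_zero {S : Type} [CommRing S] [Algebra W S]
    (hIS : ∀ c ∈ I, algebraMap W S c = 0) {c : W} {i : ℕ} (hip : i ≤ p)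
    (h : c • xi14 W I p ^ i = 0) : algebraMap W S c = 0 := by
  let ξ : Polynomial S ⧸ Ideal.span {(Polynomial.X : Polynomial S) ^ (p + 1)} :=
    Ideal.Quotient.mkₐ W _ Polynomial.X
  have hIξ : ∀ c ∈ I, c • ξ = 0 := fun c hc => by
    rw [← map_smul, Algebra.smul_def, Polynomial.algebraMap_apply, hIS c hc, map_zero, zero_mul,
      map_zero]
  have hξ : ξ ^ (p + 1) = 0 := by
    rw [← map_pow, Ideal.Quotient.mkₐ_eq_mk, Ideal.Quotient.eq_zero_iff_mem]
    exact Ideal.mem_span_singleton_self _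
  have := congrArg (liftT14 ξ 0 hIξ hξ (mul_zero ξ) (zero_pow two_ne_zero)) h
  rw [map_smul, map_pow, liftT14_xi14, ← map_pow, ← map_smul, Algebra.smul_def,
    Polynomial.algebraMap_apply, Ideal.Quotient.mkₐ_eq_mk] at this
  exact (Polynomial.mk_C_mul_X_pow_eq_zero_iff (Nat.lt_succ_of_le hip)).1 this

lemma smul_xi14_pow_eq_zero_iff {c : W} {i : ℕ} (hi : i ≠ 0) (hip : i ≤ p) :
    c • xi14 W I p ^ i = 0 ↔ c ∈ I := by
  refine ⟨fun h => ?_, fun hc => smul_xi14_pow_eq_zero hc hi⟩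
  rw [← Ideal.Quotient.eq_zero_iff_mem, ← Ideal.Quotient.algebraMap_eq]
  exact algebraMap_eq_zero_of_smul_xi14_pow_eq_zero
    (fun c hc => Ideal.Quotient.eq_zero_iff_mem.2 hc) hip h

lemma smul_al14_eq_zero_iff {c : W} : c • al14 W I p = 0 ↔ c = 0 := by
  refine ⟨fun h => ?_, fun hc => by rw [hc, zero_smul]⟩
  have := congrArg (liftT14 (0 : DualNumber W) DualNumber.eps (fun c _ => smul_zero c)
    (zero_pow p.succ_ne_zero) (zero_mul _) (by rw [sq, DualNumber.eps_mul_eps])) h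
  rw [map_smul, liftT14_al14, map_zero, ← DualNumber.inr_eq_smul_eps] at this
  exact TrivSqZeroExt.inr_injective this

lemma torsionOf_xi14_pow {i : ℕ} (hi : i ≠ 0) (hip : i ≤ p) :
    Ideal.torsionOf W (T14 W I p) (xi14 W I p ^ i) = I :=
  Ideal.ext fun _ => (Ideal.mem_torsionOf_iff _ _).trans (smul_xi14_pow_eq_zero_iff hi hip)

lemma torsionOf_al14 : Ideal.torsionOf W (T14 W I p) (al14 W I p) = ⊥ :=
  Ideal.ext fun _ => (Ideal.mem_torsionOf_iff _ _).trans smul_al14_eq_zero_iff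

end

theorem stmt_14 (I : Ideal W) (p : ℕ) :
    (∀ i : ℕ, 1 ≤ i → i ≤ p - 1 →
      Nonempty ((Submodule.span W ({xi14 W I p ^ i} : Set (T14 W I p))) ≃ₗ[W] W ⧸ I)) ∧
    Nonempty ((Submodule.span W ({al14 W I p} : Set (T14 W I p))) ≃ₗ[W] W) ∧
    (∀ i : ℕ, p < i → xi14 W I p ^ i = 0) ∧
    xi14 W I p * al14 W I p = 0 ∧
    al14 W I p ^ 2 = 0 := by
  refine ⟨fun i hi hip => ⟨?_⟩, ⟨?_⟩, fun _ => xi14_pow_eq_zero, xi14_mul_al14, al14_sq_eq_zero⟩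
  · exact (Ideal.quotTorsionOfEquivSpanSingleton W _ _).symm.trans
      (Submodule.quotEquivOfEq _ _ (torsionOf_xi14_pow (by omega) (by omega)))
  · exact (Ideal.quotTorsionOfEquivSpanSingleton W _ _).symm.trans
      (Submodule.quotEquivOfEqBot _ torsionOf_al14)
end
end
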